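/- For the Kuramoto model with symmetric coupling matrix J and common natural frequency ω, the time derivative of the energy along any solution equals a negative sum of squares: d/dt [U(φ(t))] = −2 · Σ_i (Σ_j J i j · sin(φ_i(t) − φ_j(t)))² for all t. -/

import Mathlib

/-!
Write `F i = ∑ j, J i j * sin (φ i - φ j)` for the coupling force on oscillator `i`. Differentiating
`U` gives `∑ i j, J i j * sin (φ i - φ j) * (φ̇ i - φ̇ j)`, and since `J i j * sin (φ i - φ j)` is
antisymmetric in `(i, j)` this is `2 ∑ i, F i * φ̇ i`. The ODE reads `φ̇ i = ω - F i`, and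
antisymmetry also gives `∑ i, F i = 0`, so the common frequency `ω` drops out and `-2 ∑ i, F i ^ 2`
is left.
-/

open Finset Real

section Antisymmetric

variable {ι : Type*} [Fintype ι]

theorem Finset.sum_sum_eq_zero_of_antisymm {G : Type*} [AddCommGroup G] [IsAddTorsionFree G]
    {K : ι → ι → G} (hK : ∀ i j, K j i = -K i j) : ∑ i, ∑ j, K i j = 0 := by
  refine self_eq_neg.mp ?_
  calc ∑ i, ∑ j, K i j = ∑ i, ∑ j, K j i := sum_comm
    _ = -∑ i, ∑ j, K i j := by
      simp only [← sum_neg_distrib]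
      exact sum_congr rfl fun i _ => sum_congr rfl fun j _ => hK i j

theorem Finset.sum_sum_mul_sub_of_antisymm {R : Type*} [CommRing R]
    {K : ι → ι → R} (hK : ∀ i j, K j i = -K i j) (v : ι → R) :
    ∑ i, ∑ j, K i j * (v i - v j) = 2 * ∑ i, (∑ j, K i j) * v i := by
  have hswap : ∑ i, ∑ j, K i j * v j = -∑ i, ∑ j, K i j * v i := by
    rw [sum_comm]
    simp only [← sum_neg_distrib, ← neg_mul]
    exact sum_congr rfl fun i _ => sum_congr rfl fun j _ => by rw [hK]
  simp only [mul_sub, sum_sub_distrib, hswap, sub_neg_eq_add, ← two_mul, sum_mul]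

end Antisymmetric

theorem hasDerivAt_sum_sum_mul_one_sub_cos {ι : Type*} [Fintype ι] (J : ι → ι → ℝ)
    {x : ι → ℝ → ℝ} {x' : ι → ℝ} {t : ℝ} (hx : ∀ i, HasDerivAt (x i) (x' i) t) :
    HasDerivAt (fun t => ∑ i, ∑ j, J i j * (1 - cos (x i t - x j t)))
      (∑ i, ∑ j, J i j * sin (x i t - x j t) * (x' i - x' j)) t := by
  refine HasDerivAt.fun_sum fun i _ => HasDerivAt.fun_sum fun j _ => ?_
  exact ((((hx i).fun_sub (hx j)).cos.const_sub 1).const_mul (J i j)).congr_deriv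
    (by simp only [neg_mul, neg_neg, mul_assoc])

/-- for the Kuramoto model with symmetric coupling matrix `J` and
common natural frequency `ω`, the time derivative of the energy along any
solution equals a negative sum of squares:
`d/dt U(φ(t)) = −2 · Σ_i (Σ_j J i j · sin(φ_i(t) − φ_j(t)))²`. -/
theorem kuramoto_energy_deriv
    {n : ℕ} (J : Fin n → Fin n → ℝ) (hJ : ∀ i j, J i j = J j i) (ω : ℝ)
    (φ : Fin n → ℝ → ℝ)
    -- each phase is differentiable and satisfies the Kuramoto ODE
    (hode : ∀ i t, HasDerivAt (φ i)
      (ω + ∑ j, J i j * Real.sin (φ j t - φ i t)) t) :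
    ∀ t, HasDerivAt (fun t => ∑ i, ∑ j, J i j * (1 - Real.cos (φ i t - φ j t)))
      (-2 * ∑ i, (∑ j, J i j * Real.sin (φ i t - φ j t)) ^ 2) t := by
  intro t
  have hK : ∀ i j, J j i * sin (φ j t - φ i t) = -(J i j * sin (φ i t - φ j t)) := by
    intro i j
    rw [hJ, ← neg_sub, sin_neg, mul_neg]
  have hvel : ∀ i, ω + ∑ j, J i j * sin (φ j t - φ i t)
      = ω - ∑ j, J i j * sin (φ i t - φ j t) := by
    intro i
    simp only [← neg_sub (φ i t), sin_neg, mul_neg, sum_neg_distrib, sub_eq_add_neg]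
  convert hasDerivAt_sum_sum_mul_one_sub_cos J (fun i => hode i t) using 1
  rw [sum_sum_mul_sub_of_antisymm hK]
  simp only [hvel, mul_sub, sum_sub_distrib, ← sum_mul, sum_sum_eq_zero_of_antisymm hK, sq]
  ring
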